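/- arXiv:1709.10364 — 5 statements merged into one kernel-verified Lean document; each statement's English description precedes it below -/
import Mathlib

section
/- The function j(s3,s4,s5,s6,s7) = m1(s3 + s7 + s3·s4) + (m1+m2)(s4·s7 − s5·s6) is a first integral of the reduced system: its derivative along the vector field defining equations (ṡ3, ṡ4, ṡ5, ṡ6, ṡ7) given in the reduced system vanishes identically. -/
theorem reducedSystem_jIntegral_deriv_eq_zero {m1 m2 u₁ u₂ s3 s4 s5 s6 s7
    ds3 ds4 ds5 ds6 ds7 : ℝ} (hm : m1 + m2 ≠ 0)
    (h3 : ds3 = -2 * (u₁ - u₂) * s5)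
    (h4 : ds4 = s3 * s5 + s6)
    (h5 : ds5 = -(s3 * s4) + s7)
    (h6 : ds6 = -(2 * m1 / (m1 + m2)) * u₁ * (1 + s4) - (2 * m2 / (m1 + m2)) * u₂ * s4
      + (m1 / (m1 + m2)) * s3 ^ 2 + s3 * s7)
    (h7 : ds7 = -2 * u₂ * s5 - s3 * s6) :
    m1 * (ds3 + ds7 + (ds3 * s4 + s3 * ds4))
      + (m1 + m2) * (ds4 * s7 + s4 * ds7 - (ds5 * s6 + s5 * ds6)) = 0 := by
  subst h3 h4 h5 h6 h7
  field_simp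
  ring

/-- j = m1(s3+s7+s3s4) + (m1+m2)(s4s7−s5s6) is a first integral of the reduced
system: along any solution curve its time derivative vanishes. -/
theorem stmt_9 (m1 m2 : ℝ) (hm1 : 0 < m1) (hm2 : 0 < m2) (U' : ℝ → ℝ)
    (s3 s4 s5 s6 s7 : ℝ → ℝ) (t : ℝ)
    (h3 : HasDerivAt s3
      (-2*(U' ((1+s4 t)^2+(s5 t)^2) - U' ((s4 t)^2+(s5 t)^2)) * s5 t) t)
    (h4 : HasDerivAt s4 (s3 t * s5 t + s6 t) t)
    (h5 : HasDerivAt s5 (-(s3 t * s4 t) + s7 t) t)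
    (h6 : HasDerivAt s6
      (-(2*m1/(m1+m2)) * U' ((1+s4 t)^2+(s5 t)^2) * (1+s4 t)
       - (2*m2/(m1+m2)) * U' ((s4 t)^2+(s5 t)^2) * s4 t
       + (m1/(m1+m2)) * (s3 t)^2 + s3 t * s7 t) t)
    (h7 : HasDerivAt s7 (-2 * U' ((s4 t)^2+(s5 t)^2) * s5 t - s3 t * s6 t) t) :
    HasDerivAt (fun τ => m1 * (s3 τ + s7 τ + s3 τ * s4 τ)
      + (m1+m2) * (s4 τ * s7 τ - s5 τ * s6 τ)) 0 t := by
  have hj := (((h3.add h7).add (h3.mul h4)).const_mul m1).add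
    (((h4.mul h7).sub (h5.mul h6)).const_mul (m1 + m2))
  refine hj.congr_deriv ?_
  have hm : m1 + m2 ≠ 0 := (add_pos hm1 hm2).ne'
  exact reducedSystem_jIntegral_deriv_eq_zero hm rfl rfl rfl rfl rfl
end

section
/- The Hamiltonian h(s3,s4,s5,s6,s7) = (m1/2)(s3² + 2s3s7 + s6² + s7²) + (m2/2)(s6² + s7²) + m1·U((1+s4)² + s5²) + m2·U(s4² + s5²) is a first integral of the reduced system, i.e., its Lie derivative along the reduced vector field vanishes. -/
/-!
Along a curve the derivative of `h` is `⟨∇h, ṡ⟩`, so it suffices that the reduced vector field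
is orthogonal to `∇h` pointwise. That is a polynomial identity in the state variables and the
two values `U'((1+s4)²+s5²)`, `U'(s4²+s5²)`, once the factor `m1 + m2` in `∂h/∂s6` cancels the
denominators of `ṡ6`.
-/

noncomputable def reducedHamiltonian (m1 m2 : ℝ) (U : ℝ → ℝ) (s3 s4 s5 s6 s7 : ℝ) : ℝ :=
  m1/2 * (s3^2 + 2 * s3 * s7 + s6^2 + s7^2) + m2/2 * (s6^2 + s7^2)
    + m1 * U ((1+s4)^2 + s5^2) + m2 * U (s4^2 + s5^2)

theorem HasDerivAt.comp_add_sq {U U' x y : ℝ → ℝ} {x' y' t : ℝ}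
    (hU : ∀ r, HasDerivAt U (U' r) r) (hx : HasDerivAt x x' t) (hy : HasDerivAt y y' t) :
    HasDerivAt (fun τ => U (x τ ^ 2 + y τ ^ 2))
      (U' (x t ^ 2 + y t ^ 2) * (2 * x t * x' + 2 * y t * y')) t := by
  have hr : HasDerivAt (fun τ => x τ ^ 2 + y τ ^ 2) (2 * x t * x' + 2 * y t * y') t := by
    simpa [mul_assoc] using (hx.fun_pow 2).fun_add (hy.fun_pow 2)
  exact (hU _).comp t hr

theorem hasDerivAt_reducedHamiltonian (m1 m2 : ℝ) {U U' : ℝ → ℝ}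
    (hU : ∀ r, HasDerivAt U (U' r) r) {s3 s4 s5 s6 s7 : ℝ → ℝ} {d3 d4 d5 d6 d7 t : ℝ}
    (h3 : HasDerivAt s3 d3 t) (h4 : HasDerivAt s4 d4 t) (h5 : HasDerivAt s5 d5 t)
    (h6 : HasDerivAt s6 d6 t) (h7 : HasDerivAt s7 d7 t) :
    HasDerivAt (fun τ => reducedHamiltonian m1 m2 U (s3 τ) (s4 τ) (s5 τ) (s6 τ) (s7 τ))
      (m1 * (s3 t + s7 t) * d3
        + 2 * (m1 * U' ((1+s4 t)^2 + s5 t^2) * (1 + s4 t) + m2 * U' (s4 t^2 + s5 t^2) * s4 t) * d4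
        + 2 * (m1 * U' ((1+s4 t)^2 + s5 t^2) + m2 * U' (s4 t^2 + s5 t^2)) * s5 t * d5
        + (m1 + m2) * s6 t * d6 + (m1 * s3 t + (m1 + m2) * s7 t) * d7) t := by
  have hA := (h4.const_add 1).comp_add_sq hU h5
  have hB := h4.comp_add_sq hU h5
  have H := ((((((h3.pow 2).add ((h3.mul h7).const_mul 2)).add (h6.pow 2)).add
      (h7.pow 2)).const_mul (m1/2)).add
      ((((h6.pow 2).add (h7.pow 2)).const_mul (m2/2)))).add
      ((hA.const_mul m1).add (hB.const_mul m2))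
  refine (H.congr_deriv (by norm_num; ring)).congr_of_eventuallyEq
    (.of_forall fun τ => ?_)
  simp only [reducedHamiltonian, Pi.add_apply, Pi.mul_apply, Pi.pow_apply]
  ring

theorem reducedField_orthogonal_grad_reducedHamiltonian {m1 m2 : ℝ} (hm : m1 + m2 ≠ 0)
    (u v s3 s4 s5 s6 s7 : ℝ) :
    m1 * (s3 + s7) * (-2 * (u - v) * s5)
      + 2 * (m1 * u * (1 + s4) + m2 * v * s4) * (s3 * s5 + s6)
      + 2 * (m1 * u + m2 * v) * s5 * (-(s3 * s4) + s7)
      + (m1 + m2) * s6 * (-(2*m1/(m1+m2)) * u * (1 + s4) - (2*m2/(m1+m2)) * v * s4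
          + (m1/(m1+m2)) * s3^2 + s3 * s7)
      + (m1 * s3 + (m1 + m2) * s7) * (-2 * v * s5 - s3 * s6) = 0 := by
  field_simp
  ring

/-- The reduced Hamiltonian h is a first integral of the reduced system:
its derivative along any solution curve vanishes. -/
theorem stmt_10 (m1 m2 : ℝ) (hm1 : 0 < m1) (hm2 : 0 < m2) (U U' : ℝ → ℝ)
    (hU : ∀ r : ℝ, HasDerivAt U (U' r) r)
    (s3 s4 s5 s6 s7 : ℝ → ℝ) (t : ℝ)
    (h3 : HasDerivAt s3
      (-2*(U' ((1+s4 t)^2+(s5 t)^2) - U' ((s4 t)^2+(s5 t)^2)) * s5 t) t)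
    (h4 : HasDerivAt s4 (s3 t * s5 t + s6 t) t)
    (h5 : HasDerivAt s5 (-(s3 t * s4 t) + s7 t) t)
    (h6 : HasDerivAt s6
      (-(2*m1/(m1+m2)) * U' ((1+s4 t)^2+(s5 t)^2) * (1+s4 t)
       - (2*m2/(m1+m2)) * U' ((s4 t)^2+(s5 t)^2) * s4 t
       + (m1/(m1+m2)) * (s3 t)^2 + s3 t * s7 t) t)
    (h7 : HasDerivAt s7 (-2 * U' ((s4 t)^2+(s5 t)^2) * s5 t - s3 t * s6 t) t) :
    HasDerivAt (fun τ =>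
      m1/2 * ((s3 τ)^2 + 2 * s3 τ * s7 τ + (s6 τ)^2 + (s7 τ)^2)
      + m2/2 * ((s6 τ)^2 + (s7 τ)^2)
      + m1 * U ((1+s4 τ)^2 + (s5 τ)^2) + m2 * U ((s4 τ)^2 + (s5 τ)^2)) 0 t := by
  have hm : m1 + m2 ≠ 0 := by positivity
  have H := hasDerivAt_reducedHamiltonian m1 m2 hU h3 h4 h5 h6 h7
  rwa [reducedField_orthogonal_grad_reducedHamiltonian hm] at H
end

section
/- A point (s3,s4,s5,s6,s7) ∈ ℝ⁵ with s5 = 0 and m1 + (m1+m2)s4 ≠ 0 is an equilibrium of the reduced system if and only if s6 = 0, s7 = s3·s4, and s3²·(m1 + (m1+m2)s4) = 2m1·U'((1+s4)²)·(1+s4) + 2m2·U'(s4²)·s4. -/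
/-- The `ṡ6`-component on the slice `s5 = 0`, `s7 = s3 s4`, with the factor `m1 + m2` cleared. -/
theorem radial_balance_iff {m1 m2 : ℝ} (hm : m1 + m2 ≠ 0) (a b s3 s4 : ℝ) :
    -(2*m1/(m1+m2)) * a * (1+s4) - (2*m2/(m1+m2)) * b * s4
        + (m1/(m1+m2)) * s3^2 + s3 * (s3 * s4) = 0 ↔
      s3^2 * (m1 + (m1+m2) * s4) = 2 * m1 * a * (1+s4) + 2 * m2 * b * s4 := by
  have hlhs : -(2*m1/(m1+m2)) * a * (1+s4) - (2*m2/(m1+m2)) * b * s4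
        + (m1/(m1+m2)) * s3^2 + s3 * (s3 * s4) =
      (s3^2 * (m1 + (m1+m2) * s4) - (2 * m1 * a * (1+s4) + 2 * m2 * b * s4)) / (m1+m2) := by
    field_simp
    ring
  rw [hlhs, div_eq_zero_iff, or_iff_left hm, sub_eq_zero]

theorem stmt_11_general (m1 m2 : ℝ) (hm1 : 0 < m1) (hm2 : 0 < m2) (U' : ℝ → ℝ)
    (s3 s4 s5 s6 s7 : ℝ) (h5 : s5 = 0) :
    ((-2*(U' ((1+s4)^2+s5^2) - U' (s4^2+s5^2)) * s5 = 0) ∧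
     (s3 * s5 + s6 = 0) ∧
     (-(s3 * s4) + s7 = 0) ∧
     (-(2*m1/(m1+m2)) * U' ((1+s4)^2+s5^2) * (1+s4)
       - (2*m2/(m1+m2)) * U' (s4^2+s5^2) * s4
       + (m1/(m1+m2)) * s3^2 + s3 * s7 = 0) ∧
     (-2 * U' (s4^2+s5^2) * s5 - s3 * s6 = 0)) ↔
    (s6 = 0 ∧ s7 = s3 * s4 ∧
     s3^2 * (m1 + (m1+m2) * s4)
       = 2 * m1 * U' ((1+s4)^2) * (1+s4) + 2 * m2 * U' (s4^2) * s4) := by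
  subst h5
  have hm : m1 + m2 ≠ 0 := by positivity
  simp only [zero_pow two_ne_zero, add_zero]
  constructor
  · rintro ⟨-, h6, h7, hrad, -⟩
    obtain rfl : s6 = 0 := by linarith
    obtain rfl : s7 = s3 * s4 := by linarith
    exact ⟨rfl, rfl, (radial_balance_iff hm _ _ _ _).1 hrad⟩
  · rintro ⟨rfl, rfl, hrad⟩
    exact ⟨by ring, by ring, by ring, (radial_balance_iff hm _ _ _ _).2 hrad, by ring⟩

/-- Equilibria of the reduced system with s5 = 0 and m1+(m1+m2)s4 ≠ 0 are
characterized by s6 = 0, s7 = s3·s4, and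
s3²·(m1+(m1+m2)s4) = 2m1·U'((1+s4)²)·(1+s4) + 2m2·U'(s4²)·s4. -/
theorem stmt_11 (m1 m2 : ℝ) (hm1 : 0 < m1) (hm2 : 0 < m2) (U' : ℝ → ℝ)
    (s3 s4 s5 s6 s7 : ℝ) (h5 : s5 = 0) (hden : m1 + (m1+m2) * s4 ≠ 0) :
    ((-2*(U' ((1+s4)^2+s5^2) - U' (s4^2+s5^2)) * s5 = 0) ∧
     (s3 * s5 + s6 = 0) ∧
     (-(s3 * s4) + s7 = 0) ∧
     (-(2*m1/(m1+m2)) * U' ((1+s4)^2+s5^2) * (1+s4)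
       - (2*m2/(m1+m2)) * U' (s4^2+s5^2) * s4
       + (m1/(m1+m2)) * s3^2 + s3 * s7 = 0) ∧
     (-2 * U' (s4^2+s5^2) * s5 - s3 * s6 = 0)) ↔
    (s6 = 0 ∧ s7 = s3 * s4 ∧
     s3^2 * (m1 + (m1+m2) * s4)
       = 2 * m1 * U' ((1+s4)^2) * (1+s4) + 2 * m2 * U' (s4^2) * s4) :=
  stmt_11_general m1 m2 hm1 hm2 U' s3 s4 s5 s6 s7 h5
end

section
/- If m1 ≠ m2 and U' is strictly monotone (strictly increasing or strictly decreasing), then the reduced system has no equilibrium with s5 = 0 and s4 = −m1/(m1+m2). -/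
/-! The point `s = (-m1/(m1+m2), 0)` is the centre of mass of the primaries at `(-1, 0)` and
`(0, 0)`, at squared distances `(m2/(m1+m2))²` and `(m1/(m1+m2))²` from them. On the
equation `ṡ7 = 0` the `s3`-terms of `ṡ6` cancel there, leaving
`ṡ6 = 2 m1 m2/(m1+m2)² · (U'(s4²) - U'((1+s4)²))`. For `m1 ≠ m2` the two squared distances
differ, so an injective `U'` keeps this nonzero. -/

lemma sq_one_sub_div_add_ne_sq_div {m1 m2 : ℝ} (hm1 : 0 < m1) (hm2 : 0 < m2) (hmm : m1 ≠ m2) :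
    (1 - m1 / (m1 + m2)) ^ 2 ≠ (m1 / (m1 + m2)) ^ 2 := by
  have hM : 0 < m1 + m2 := by positivity
  rw [one_sub_div hM.ne', add_sub_cancel_left]
  intro h
  rw [sq_eq_sq₀ (by positivity) (by positivity), div_left_inj' hM.ne'] at h
  exact hmm h.symm

lemma centerOfMass_force_eq {m1 m2 s3 s4 s7 : ℝ} (hM : m1 + m2 ≠ 0) (a b : ℝ)
    (hs4 : s4 = -m1 / (m1 + m2)) (hs7 : s7 = s3 * s4) :
    -(2 * m1 / (m1 + m2)) * a * (1 + s4) - (2 * m2 / (m1 + m2)) * b * s4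
        + (m1 / (m1 + m2)) * s3 ^ 2 + s3 * s7
      = 2 * m1 * m2 / (m1 + m2) ^ 2 * (b - a) := by
  subst hs4 hs7
  field_simp
  ring

/-- If m1 ≠ m2 and U' is strictly monotone, the reduced system has no
equilibrium with s5 = 0 and s4 = −m1/(m1+m2). -/
theorem stmt_12 (m1 m2 : ℝ) (hm1 : 0 < m1) (hm2 : 0 < m2) (hmm : m1 ≠ m2)
    (U' : ℝ → ℝ) (hmono : StrictMono U' ∨ StrictAnti U')
    (s3 s4 s5 s6 s7 : ℝ) (h5 : s5 = 0) (h4 : s4 = -m1 / (m1+m2)) :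
    ¬ ((-2*(U' ((1+s4)^2+s5^2) - U' (s4^2+s5^2)) * s5 = 0) ∧
       (s3 * s5 + s6 = 0) ∧
       (-(s3 * s4) + s7 = 0) ∧
       (-(2*m1/(m1+m2)) * U' ((1+s4)^2+s5^2) * (1+s4)
         - (2*m2/(m1+m2)) * U' (s4^2+s5^2) * s4
         + (m1/(m1+m2)) * s3^2 + s3 * s7 = 0) ∧
       (-2 * U' (s4^2+s5^2) * s5 - s3 * s6 = 0)) := by
  rintro ⟨-, -, hs7, hs6, -⟩
  have hM : m1 + m2 ≠ 0 := by positivity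
  rw [centerOfMass_force_eq hM _ _ h4 (by linarith)] at hs6
  have hU : U' ((1 + s4) ^ 2 + s5 ^ 2) = U' (s4 ^ 2 + s5 ^ 2) := by
    have : 2 * m1 * m2 / (m1 + m2) ^ 2 ≠ 0 := by positivity
    linarith [(mul_eq_zero.mp hs6).resolve_left this]
  have hinj : Function.Injective U' := hmono.elim StrictMono.injective StrictAnti.injective
  have hsq : (1 - m1 / (m1 + m2)) ^ 2 = (m1 / (m1 + m2)) ^ 2 := by
    simpa [h4, h5, sub_eq_add_neg, neg_div] using hinj hU
  exact sq_one_sub_div_add_ne_sq_div hm1 hm2 hmm hsq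
end

section
/- Suppose U' is strictly monotone. Then a point (s3,s4,s5,s6,s7) with s5 ≠ 0 is an equilibrium of the reduced system if and only if s4 = −1/2, s6 = −s3·s5, s7 = −s3/2, and s3² = 2·U'(1/4 + s5²). -/
/-!
The first equation with `s5 ≠ 0` forces `U'` to take equal values at `(1+s4)² + s5²` and
`s4² + s5²`; injectivity of `U'` turns this into `(1+s4)² = s4²`, i.e. `s4 = -1/2`. Both
potential arguments then equal `1/4 + s5²`, after which the remaining equations are linear
in `s6`, `s7` and `s3²`.
-/

lemma eq_neg_half_of_sq_one_add_eq_sq {x : ℝ} (h : (1 + x) ^ 2 = x ^ 2) : x = -(1 / 2) := by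
  linear_combination h / 2

lemma eq_neg_half_of_injective_comp {f : ℝ → ℝ} (hf : Function.Injective f) {x y : ℝ}
    (h : f ((1 + x) ^ 2 + y) = f (x ^ 2 + y)) : x = -(1 / 2) :=
  eq_neg_half_of_sq_one_add_eq_sq (add_right_cancel (hf h))

lemma one_add_neg_half_sq_add (y : ℝ) : (1 + -(1 / 2) : ℝ) ^ 2 + y = 1 / 4 + y := by norm_num

lemma neg_half_sq_add (y : ℝ) : (-(1 / 2) : ℝ) ^ 2 + y = 1 / 4 + y := by norm_num

/-- For strictly monotone U', a point with s5 ≠ 0 is an equilibrium of the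
reduced system iff s4 = −1/2, s6 = −s3·s5, s7 = −s3/2 and s3² = 2U'(1/4+s5²). -/
theorem stmt_13 (m1 m2 : ℝ) (hm1 : 0 < m1) (hm2 : 0 < m2)
    (U' : ℝ → ℝ) (hmono : StrictMono U' ∨ StrictAnti U')
    (s3 s4 s5 s6 s7 : ℝ) (h5 : s5 ≠ 0) :
    ((-2*(U' ((1+s4)^2+s5^2) - U' (s4^2+s5^2)) * s5 = 0) ∧
     (s3 * s5 + s6 = 0) ∧
     (-(s3 * s4) + s7 = 0) ∧
     (-(2*m1/(m1+m2)) * U' ((1+s4)^2+s5^2) * (1+s4)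
       - (2*m2/(m1+m2)) * U' (s4^2+s5^2) * s4
       + (m1/(m1+m2)) * s3^2 + s3 * s7 = 0) ∧
     (-2 * U' (s4^2+s5^2) * s5 - s3 * s6 = 0)) ↔
    (s4 = -(1/2) ∧ s6 = -(s3 * s5) ∧ s7 = -(s3/2) ∧
     s3^2 = 2 * U' (1/4 + s5^2)) := by
  have hinj : Function.Injective U' := hmono.elim StrictMono.injective StrictAnti.injective
  constructor
  · rintro ⟨h1, h2, h3, -, h5'⟩
    have hU : U' ((1 + s4) ^ 2 + s5 ^ 2) = U' (s4 ^ 2 + s5 ^ 2) := by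
      simpa [h5, sub_eq_zero] using h1
    obtain rfl := eq_neg_half_of_injective_comp hinj hU
    rw [neg_half_sq_add] at h5'
    have hs6 : s6 = -(s3 * s5) := by linear_combination h2
    refine ⟨rfl, hs6, by linear_combination h3, mul_right_cancel₀ h5 ?_⟩
    linear_combination h5' + s3 * hs6
  · rintro ⟨rfl, rfl, rfl, hs3⟩
    have hm : m1 + m2 ≠ 0 := by positivity
    have hweights : m1 / (m1 + m2) + m2 / (m1 + m2) = 1 := by rw [← add_div, div_self hm]
    rw [one_add_neg_half_sq_add, neg_half_sq_add]
    refine ⟨by ring, by ring, by ring, ?_, by linear_combination s5 * hs3⟩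
    linear_combination (m1 / (m1 + m2) - 1 / 2) * hs3 + U' (1 / 4 + s5 ^ 2) * hweights
end
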